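/- arXiv:1612.08722 — 2 statements merged into one kernel-verified Lean document; each statement's English description precedes it below -/
import Mathlib

section
/- If A is a subset of a finite abelian group G with |G| ≥ 2, then for every real number c, ∑_{g ∈ G} (R_A(g) − c)² ≥ (|A|⁴/|G| − 2|A|³ + |A|²|G|)/(|G| − 1). -/
/-!
Expanding the square, `∑ g, (R_A g - c) ^ 2 ≥ ∑ g, R_A g ^ 2 - |A| ^ 4 / |G|` for every `c`, and
`∑ g, R_A g ^ 2` is the additive energy `E[A]`. Counting the energy through differences instead,
`E[A] = ∑ d, D_A d ^ 2` with `D_A d = #{(a, a') | a - a' = d}`. Here `D_A 0 = |A|` is forced, and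
Cauchy–Schwarz on the remaining `|G| - 1` values, which sum to `|A| ^ 2 - |A|`, gives
`E[A] ≥ |A| ^ 2 + (|A| ^ 2 - |A|) ^ 2 / (|G| - 1)`.
-/

def repFnG {G : Type*} [AddCommGroup G] [DecidableEq G] (A : Finset G) (g : G) : ℕ :=
  ((A ×ˢ A).filter (fun p => p.1 + p.2 = g)).card

open Finset
open scoped Combinatorics.Additive

namespace Finset

theorem sum_card_fiberwise_univ {ι κ : Type*} [DecidableEq κ] [Fintype κ] (s : Finset ι)
    (f : ι → κ) : ∑ k, #{i ∈ s | f i = k} = #s :=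
  (card_eq_sum_card_fiberwise fun _ _ => mem_coe.2 (mem_univ _)).symm

theorem sum_card_fiberwise_sq_eq_card_filter {ι κ : Type*} [DecidableEq κ] [Fintype κ]
    (s : Finset ι) (f : ι → κ) :
    ∑ k, #{i ∈ s | f i = k} ^ 2 = #{p ∈ s ×ˢ s | f p.1 = f p.2} := by
  rw [← sum_card_fiberwise_univ _ fun p => f p.1]
  refine sum_congr rfl fun k _ => ?_
  rw [sq, ← card_product, filter_filter]
  congr 1
  ext ⟨i, j⟩
  simp only [mem_product, mem_filter]
  constructor
  · rintro ⟨⟨hi, hki⟩, hj, hkj⟩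
    exact ⟨⟨hi, hj⟩, hki.trans hkj.symm, hki⟩
  · rintro ⟨⟨hi, hj⟩, hij, hki⟩
    exact ⟨⟨hi, hki⟩, hj, hij ▸ hki⟩

theorem sum_sq_sub_sq_sum_div_card_le_sum_sub_sq {ι : Type*} (s : Finset ι) (f : ι → ℝ)
    (c : ℝ) :
    ∑ i ∈ s, f i ^ 2 - (∑ i ∈ s, f i) ^ 2 / #s ≤ ∑ i ∈ s, (f i - c) ^ 2 := by
  obtain rfl | hs := s.eq_empty_or_nonempty
  · simp
  have hcard : (0 : ℝ) < #s := by exact_mod_cast hs.card_pos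
  have hexpand :
      ∑ i ∈ s, (f i - c) ^ 2 = ∑ i ∈ s, f i ^ 2 - 2 * c * ∑ i ∈ s, f i + #s * c ^ 2 :=
    calc ∑ i ∈ s, (f i - c) ^ 2 = ∑ i ∈ s, (f i ^ 2 - 2 * c * f i + c ^ 2) :=
          sum_congr rfl fun _ _ => by ring
      _ = _ := by rw [sum_add_distrib, sum_sub_distrib, ← mul_sum, sum_const, nsmul_eq_mul]
  have hsquare : (∑ i ∈ s, f i) ^ 2 / #s - 2 * c * ∑ i ∈ s, f i + #s * c ^ 2
      = (∑ i ∈ s, f i - #s * c) ^ 2 / #s := by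
    field_simp
    ring
  have := div_nonneg (sq_nonneg (∑ i ∈ s, f i - #s * c)) hcard.le
  linarith

theorem sq_add_sq_sum_sub_div_le_sum_sq {ι : Type*} [Fintype ι] [DecidableEq ι] (f : ι → ℝ)
    (i : ι) : f i ^ 2 + (∑ j, f j - f i) ^ 2 / (Fintype.card ι - 1) ≤ ∑ j, f j ^ 2 := by
  have hcard : (#(univ.erase i) : ℝ) = Fintype.card ι - 1 := by
    rw [card_erase_of_mem (mem_univ _), card_univ, Nat.cast_pred (Fintype.card_pos_iff.2 ⟨i⟩)]
  have hCS : (∑ j ∈ univ.erase i, f j) ^ 2 / #(univ.erase i) ≤ ∑ j ∈ univ.erase i, f j ^ 2 :=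
    div_le_of_le_mul₀ (Nat.cast_nonneg _) (sum_nonneg fun _ _ => sq_nonneg _)
      (by rw [mul_comm]; exact sq_sum_le_card_mul_sum_sq)
  rw [← add_sum_erase _ _ (mem_univ i), ← add_sum_erase _ _ (mem_univ i), add_sub_cancel_left,
    ← hcard]
  linarith

theorem card_filter_sub_eq_zero {α : Type*} [AddGroup α] [DecidableEq α] (s : Finset α) :
    #{xy ∈ s ×ˢ s | xy.1 - xy.2 = 0} = #s := by
  simp only [sub_eq_zero, ← diag_eq_filter, diag_card]

variable {α : Type*} [AddCommGroup α] [Fintype α] [DecidableEq α] (s : Finset α)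

theorem addEnergy_self_eq_sum_sq_card_sub :
    E[s] = ∑ d, #{xy ∈ s ×ˢ s | xy.1 - xy.2 = d} ^ 2 := by
  rw [sum_card_fiberwise_sq_eq_card_filter, addEnergy]
  refine card_equiv ((Equiv.refl _).prodCongr (Equiv.prodComm _ _)) fun x => ?_
  simp only [mem_filter, mem_product, Equiv.prodCongr_apply, Equiv.coe_refl, Equiv.coe_prodComm,
    Prod.map_fst, Prod.map_snd, id, Prod.fst_swap, Prod.snd_swap, sub_eq_sub_iff_add_eq_add]
  rw [add_comm x.2.2]
  tauto

theorem card_sq_add_le_addEnergy_self :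
    (#s : ℝ) ^ 2 + ((#s : ℝ) ^ 2 - #s) ^ 2 / (Fintype.card α - 1) ≤ E[s] := by
  have hCS := sq_add_sq_sum_sub_div_le_sum_sq
    (fun d => (#{xy ∈ s ×ˢ s | xy.1 - xy.2 = d} : ℝ)) 0
  have hsum : ∑ d, (#{xy ∈ s ×ˢ s | xy.1 - xy.2 = d} : ℝ) = #s ^ 2 := by
    rw [← Nat.cast_sum, sum_card_fiberwise_univ, card_product, sq, Nat.cast_mul]
  simp only [card_filter_sub_eq_zero, hsum] at hCS
  have hE : (E[s] : ℝ) = ∑ d, (#{xy ∈ s ×ˢ s | xy.1 - xy.2 = d} : ℝ) ^ 2 := by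
    rw [addEnergy_self_eq_sum_sq_card_sub]
    push_cast
    rfl
  rwa [hE]

end Finset

theorem stmt12 {G : Type*} [AddCommGroup G] [Fintype G] [DecidableEq G]
    (hG : 2 ≤ Fintype.card G) (A : Finset G) (c : ℝ) :
    ((A.card : ℝ) ^ 4 / Fintype.card G - 2 * A.card ^ 3 + A.card ^ 2 * Fintype.card G) /
        (Fintype.card G - 1) ≤
      ∑ g : G, ((repFnG A g : ℝ) - c) ^ 2 := by
  have hN : (2 : ℝ) ≤ Fintype.card G := by exact_mod_cast hG
  have hsum : ∑ g : G, (repFnG A g : ℝ) = (#A : ℝ) ^ 2 := by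
    simp only [repFnG]
    rw [← Nat.cast_sum, sum_card_fiberwise_univ, card_product, sq, Nat.cast_mul]
  have henergy : ∑ g : G, (repFnG A g : ℝ) ^ 2 = E[A] := by
    exact_mod_cast (addEnergy_eq_sum_sq A A).symm
  have hvar := sum_sq_sub_sq_sum_div_card_le_sum_sub_sq univ (fun g => (repFnG A g : ℝ)) c
  rw [henergy, hsum, card_univ] at hvar
  have hlower := card_sq_add_le_addEnergy_self A
  generalize (Fintype.card G : ℝ) = N at *
  generalize (#A : ℝ) = n at *
  have hidentity : (n ^ 4 / N - 2 * n ^ 3 + n ^ 2 * N) / (N - 1)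
      = n ^ 2 + (n ^ 2 - n) ^ 2 / (N - 1) - (n ^ 2) ^ 2 / N := by
    field_simp [show N - 1 ≠ 0 by linarith]
    ring
  rw [hidentity]
  linarith
end

section
/- There is no set A ⊆ Z_m with 1 ≤ R_A(n) ≤ 3 for all n ∈ Z_m when m ≥ 12; equivalently, Ruzsa's number R_m ≥ 4 for all m ≥ 12. -/
/-!
Write `r(n)` for the number of ordered representations `n = a + a'` with `a, a' ∈ A`, `k = #A` and
`m` for the order of the group. Swapping `a` and `a'` pairs off the representations with `a ≠ a'`,
so `r(n)` is odd only if `n = a + a` for some `a ∈ A`. When `1 ≤ r ≤ 3`, `(r(n) - 2)²` is the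
indicator of `r(n)` being odd, so `S := ∑ₙ (r(n) - 2)² ≤ k`; also `2m - k² = ∑ₙ (2 - r(n)) ≤ S`.
On the other hand `∑ₙ r(n)²` is the additive energy of `A`, which is also `∑ₜ d(t)²` for the
difference counts `d(t) = #{a - a' = t}`. As `d(0) = k` and `∑ₜ d(t) = k²`, Cauchy–Schwarz over
the `m - 1` nonzero `t` gives `(k² - k)² ≤ (m - 1)(S + 3k² - 4m)`, a sharpening of the
Lev–Sárközy inequality. These three inequalities are incompatible once `m ≥ 12`.
-/

def repFn {m : ℕ} (A : Finset (ZMod m)) (n : ZMod m) : ℕ :=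
  ((A ×ˢ A).filter (fun p => p.1 + p.2 = n)).card

open Finset
open scoped Combinatorics.Additive

namespace Finset

lemma sum_card_filter_product_eq_sq {ι κ : Type*} [Fintype κ] [DecidableEq κ] (s : Finset ι)
    (f : ι × ι → κ) : ∑ b, #{x ∈ s ×ˢ s | f x = b} = #s ^ 2 := by
  rw [← card_eq_sum_card_fiberwise fun _ _ => mem_univ _, card_product, sq]

lemma sum_sq_card_filter_eq {ι κ : Type*} [Fintype κ] [DecidableEq κ] (s : Finset ι)
    (f : ι → κ) : ∑ b, #{x ∈ s | f x = b} ^ 2 = #{xy ∈ s ×ˢ s | f xy.1 = f xy.2} := by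
  rw [card_eq_sum_card_fiberwise (f := fun xy => f xy.1) (t := univ) fun _ _ => mem_univ _]
  refine sum_congr rfl fun b _ => ?_
  rw [sq, ← card_product, ← filter_product, filter_filter]
  congr 1
  refine filter_congr fun xy _ => ?_
  constructor
  · rintro ⟨h1, h2⟩; exact ⟨h1.trans h2.symm, h1⟩
  · rintro ⟨h, h1⟩; exact ⟨h1, h.symm.trans h1⟩

section AddCommMagma

variable {G : Type*} [AddCommMagma G] [DecidableEq G] (A : Finset G)

lemma even_card_filter_add_eq {n : G} (hn : ∀ a ∈ A, a + a ≠ n) :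
    Even #{p ∈ A ×ˢ A | p.1 + p.2 = n} := by
  rw [← ZMod.natCast_eq_zero_iff_even, card_eq_sum_ones, Nat.cast_sum, Nat.cast_one]
  refine sum_involution (fun p _ => p.swap) (fun _ _ => rfl) ?_ ?_ fun _ _ => rfl
  · rintro ⟨a, b⟩ hp - hab
    simp only [mem_filter, mem_product] at hp
    simp only [Prod.swap_prod_mk, Prod.mk.injEq] at hab
    exact hn a hp.1.1 (hab.2 ▸ hp.2)
  · rintro ⟨a, b⟩ hp
    simp only [mem_filter, mem_product] at hp ⊢
    exact ⟨hp.1.symm, add_comm b a ▸ hp.2⟩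

lemma card_filter_odd_card_filter_add_eq_le [Fintype G] :
    #{n | Odd #{p ∈ A ×ˢ A | p.1 + p.2 = n}} ≤ #A := by
  refine (card_le_card fun n hn => ?_).trans (card_image_le (f := fun a => a + a))
  rw [mem_filter, ← Nat.not_even_iff_odd] at hn
  by_contra h
  exact hn.2 <| even_card_filter_add_eq A fun a ha han => h <| mem_image.2 ⟨a, ha, han⟩

lemma sum_sq_sub_two_le_card [Fintype G]
    (hA : ∀ n, #{p ∈ A ×ˢ A | p.1 + p.2 = n} ∈ Set.Icc 1 3) :
    ∑ n, ((#{p ∈ A ×ˢ A | p.1 + p.2 = n} : ℤ) - 2) ^ 2 ≤ (#A : ℤ) := by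
  calc _ = ∑ n, if Odd #{p ∈ A ×ˢ A | p.1 + p.2 = n} then (1 : ℤ) else 0 :=
        sum_congr rfl fun n _ => by
          obtain ⟨h1, h3⟩ := hA n
          interval_cases #{p ∈ A ×ˢ A | p.1 + p.2 = n} <;> decide
    _ = (#{n | Odd #{p ∈ A ×ˢ A | p.1 + p.2 = n}} : ℤ) := by rw [sum_boole]
    _ ≤ #A := by exact_mod_cast card_filter_odd_card_filter_add_eq_le A

end AddCommMagma

lemma card_filter_sub_eq_zero_s13 {G : Type*} [AddGroup G] [DecidableEq G] (A : Finset G) :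
    #{p ∈ A ×ˢ A | p.1 - p.2 = 0} = #A := by
  simp only [sub_eq_zero, ← diag_eq_filter, diag_card]

section AddCommGroup

variable {G : Type*} [AddCommGroup G] [Fintype G] [DecidableEq G] (A : Finset G)

lemma sum_sq_card_filter_sub_eq_addEnergy :
    ∑ t, #{p ∈ A ×ˢ A | p.1 - p.2 = t} ^ 2 = E[A] := by
  rw [sum_sq_card_filter_eq, addEnergy]
  refine card_equiv ((Equiv.refl _).prodCongr (Equiv.prodComm _ _)) fun x => ?_
  simp only [mem_filter, mem_product, Equiv.prodCongr_apply, Equiv.coe_refl, Equiv.coe_prodComm,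
    Prod.map_fst, Prod.map_snd, id, Prod.fst_swap, Prod.snd_swap, sub_eq_sub_iff_add_eq_add]
  rw [add_comm x.2.1]
  tauto

lemma sq_card_sq_sub_card_le_mul_addEnergy_sub :
    ((#A : ℤ) ^ 2 - #A) ^ 2 ≤ (Fintype.card G - 1) * (E[A] - #A ^ 2) := by
  set d : G → ℤ := fun t => #{p ∈ A ×ˢ A | p.1 - p.2 = t}
  have hsum : ∑ t, d t = #A ^ 2 := by
    simp only [d]; exact_mod_cast sum_card_filter_product_eq_sq A _
  have hsq : ∑ t, d t ^ 2 = E[A] := by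
    simp only [d]; exact_mod_cast sum_sq_card_filter_sub_eq_addEnergy A
  have h0 : d 0 = #A := by
    simp only [d]; exact_mod_cast card_filter_sub_eq_zero_s13 A
  calc ((#A : ℤ) ^ 2 - #A) ^ 2 = (∑ t ∈ univ.erase 0, d t) ^ 2 := by
        rw [sum_erase_eq_sub (mem_univ _), hsum, h0]
    _ ≤ #(univ.erase 0) * ∑ t ∈ univ.erase 0, d t ^ 2 := sq_sum_le_card_mul_sum_sq
    _ = (Fintype.card G - 1) * (E[A] - #A ^ 2) := by
        rw [sum_erase_eq_sub (mem_univ _), hsq, h0, card_erase_of_mem (mem_univ _),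
          card_univ, Nat.cast_sub Fintype.card_pos, Nat.cast_one]

lemma sq_card_sq_sub_card_le_mul_sum_sq_sub_two :
    ((#A : ℤ) ^ 2 - #A) ^ 2 ≤ (Fintype.card G - 1) *
      (∑ n, ((#{p ∈ A ×ˢ A | p.1 + p.2 = n} : ℤ) - 2) ^ 2 + 3 * #A ^ 2 - 4 * Fintype.card G) := by
  set r : G → ℤ := fun n => #{p ∈ A ×ˢ A | p.1 + p.2 = n}
  have hsum : ∑ n, r n = #A ^ 2 := by
    simp only [r]; exact_mod_cast sum_card_filter_product_eq_sq A _
  have hsq : ∑ n, r n ^ 2 = E[A] := by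
    simp only [r]; exact_mod_cast (addEnergy_eq_sum_sq A A).symm
  have hexpand : ∑ n, (r n - 2) ^ 2 = (E[A] : ℤ) - 4 * #A ^ 2 + 4 * Fintype.card G := by
    simp only [sub_sq, sum_add_distrib, sum_sub_distrib, ← sum_mul, mul_assoc, ← mul_sum, hsum,
      hsq, sum_const, card_univ, nsmul_eq_mul]
    ring
  calc _ ≤ (Fintype.card G - 1) * ((E[A] : ℤ) - #A ^ 2) :=
        sq_card_sq_sub_card_le_mul_addEnergy_sub A
    _ = _ := by rw [hexpand]; ring

lemma two_mul_card_sub_sq_le_sum_sq_sub_two :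
    2 * (Fintype.card G : ℤ) - #A ^ 2 ≤ ∑ n, ((#{p ∈ A ×ˢ A | p.1 + p.2 = n} : ℤ) - 2) ^ 2 := by
  have hsum : ∑ n, (#{p ∈ A ×ˢ A | p.1 + p.2 = n} : ℤ) = #A ^ 2 := by
    exact_mod_cast sum_card_filter_product_eq_sq A _
  calc _ = ∑ n, (2 - (#{p ∈ A ×ˢ A | p.1 + p.2 = n} : ℤ)) := by
        rw [sum_sub_distrib, hsum, sum_const, card_univ, nsmul_eq_mul, mul_comm]
    _ ≤ _ := sum_le_sum fun n _ => by
        rw [← neg_sub, ← neg_sq (_ - 2)]; exact Int.le_self_sq _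

end AddCommGroup
end Finset

lemma card_lt_twelve_of_forall_card_filter_add_eq_mem_Icc {G : Type*} [AddCommGroup G]
    [Fintype G] [DecidableEq G] (A : Finset G)
    (hA : ∀ n, #{p ∈ A ×ˢ A | p.1 + p.2 = n} ∈ Set.Icc 1 3) : Fintype.card G < 12 := by
  have hS := sum_sq_sub_two_le_card A hA
  have hmean := two_mul_card_sub_sq_le_sum_sq_sub_two A
  have hLS := sq_card_sq_sub_card_le_mul_sum_sq_sub_two A
  generalize ∑ n, ((#{p ∈ A ×ˢ A | p.1 + p.2 = n} : ℤ) - 2) ^ 2 = S at hS hmean hLS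
  generalize (#A : ℤ) = k at hS hmean hLS
  by_contra! hm
  have hm12 : (12 : ℤ) ≤ Fintype.card G := by exact_mod_cast hm
  generalize (Fintype.card G : ℤ) = m at hm12 hmean hLS
  have hkey : (k ^ 2 - k) ^ 2 ≤ (m - 1) * (3 * k ^ 2 + k - 4 * m) :=
    hLS.trans (mul_le_mul_of_nonneg_left (by linarith) (by linarith))
  nlinarith [sq_nonneg (k - 8), sq_nonneg (k ^ 2 - 2 * m), sq_nonneg (m - 12)]

theorem stmt13 (m : ℕ) (hm : 12 ≤ m) :
    ¬ ∃ A : Finset (ZMod m), ∀ n : ZMod m, 1 ≤ repFn A n ∧ repFn A n ≤ 3 := by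
  rintro ⟨A, hA⟩
  have : NeZero m := ⟨by omega⟩
  have hcard := card_lt_twelve_of_forall_card_filter_add_eq_mem_Icc A hA
  rw [ZMod.card] at hcard
  omega
end
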